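/- arXiv:1905.07693 — 6 statements merged into one kernel-verified Lean document; each statement's English description precedes it below -/
import Mathlib

section
/- Let B > 0 and c > 0 be real numbers, let (A_ν) be a family of nonnegative real numbers indexed by multi-indices ν, and let (Υ_j)_{j≥1} be a sequence of nonnegative real numbers. Suppose that A_0 ≤ B and that for every multi-index ν ≠ 0 one has A_ν ≤ ∑_{j≥1} ∑_{k=1}^{ν_j} binom(ν_j, k) c^k Υ_j A_{ν − k·e_j}. Then for every multi-index ν, A_ν ≤ c^{|ν|} B ∑_{m ≤ ν} |m|! Υ^m ∏_{i≥1} S(ν_i, m_i). -/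
/-- Stirling numbers of the second kind, as real numbers:
`S(n,k) = (1/k!) ∑_{j=0}^{k} (−1)^{k−j} binom(k,j) j^n`. -/
noncomputable def stirlingS2 (n k : ℕ) : ℝ :=
  (1 / (k.factorial : ℝ)) *
    ∑ j ∈ Finset.range (k + 1), (-1 : ℝ) ^ (k - j) * (k.choose j : ℝ) * (j : ℝ) ^ n

/-- The order `|ν| = ∑_j ν_j` of a multi-index `ν`. -/
def multiOrder (ν : ℕ →₀ ℕ) : ℕ := ν.sum fun _ k => k

/-- `Υ^m = ∏_{j : m_j ≠ 0} Υ_j^{m_j}`. -/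
noncomputable def multiPow (Υ : ℕ → ℝ) (m : ℕ →₀ ℕ) : ℝ := m.prod fun j k => Υ j ^ k

/-!
Let `T ν = stirlingBound Υ ν` be the right-hand side without the factor `c ^ |ν| * B`. The point
is that `T` satisfies the recurrence with equality and with `c = 1`: `T 0 = 1` and, for `ν ≠ 0`,
`T ν = ∑_j Υ_j ∑_{k=1}^{ν_j} binom(ν_j, k) T (ν - k e_j)`. Hence `c ^ |ν| * B * T ν` dominates
`A ν` by well-founded induction on `ν`.

The identity for `T` comes from splitting `|m|! = ∑_j m_j (|m| - 1)!`, shifting `m` by `e_j`,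
and the Stirling recurrence `(k + 1) S(n, k + 1) = ∑_{i=1}^{n} binom(n, i) S(n - i, k)`. The
latter follows from `k! S(n, k) = Δ^k (x ↦ x ^ n) 0` and `Δ x ^ n = ∑_{i<n} binom(n, i) x ^ i`.
-/

open Finset fwdDiff
open Finsupp (single)

lemma stirlingS2_eq_fwdDiff_iter (n k : ℕ) :
    stirlingS2 n k = (Δ_[1])^[k] (fun r : ℝ ↦ r ^ n) 0 / k.factorial := by
  rw [fwdDiff_iter_eq_sum_shift, stirlingS2, one_div_mul_eq_div]
  congr 1
  refine sum_congr rfl fun j _ ↦ ?_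
  simp [zsmul_eq_mul]

lemma stirlingS2_eq_zero_of_lt {n k : ℕ} (h : n < k) : stirlingS2 n k = 0 := by
  simp [stirlingS2_eq_fwdDiff_iter, fwdDiff_iter_pow_eq_zero_of_lt h]

@[simp] lemma stirlingS2_zero_zero : stirlingS2 0 0 = 1 := by
  simp [stirlingS2]

lemma stirlingS2_zero_right {n : ℕ} (hn : n ≠ 0) : stirlingS2 n 0 = 0 := by
  simp [stirlingS2, hn]

lemma fwdDiff_pow {R : Type*} [CommRing R] (n : ℕ) :
    Δ_[1] (fun r : R ↦ r ^ n) = ∑ i ∈ range n, n.choose i • fun r ↦ r ^ i := by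
  ext x
  simp [nsmul_eq_mul, fwdDiff, add_pow, sum_range_succ, mul_comm]

lemma succ_mul_stirlingS2_succ (n k : ℕ) :
    (k + 1 : ℝ) * stirlingS2 n (k + 1) = ∑ i ∈ range n, n.choose i * stirlingS2 i k := by
  have hΔ : (Δ_[1])^[k + 1] (fun r : ℝ ↦ r ^ n) 0 =
      ∑ i ∈ range n, n.choose i * (Δ_[1])^[k] (fun r : ℝ ↦ r ^ i) 0 := by
    rw [Function.iterate_succ_apply, fwdDiff_pow, fwdDiff_iter_finsetSum, Finset.sum_apply]
    refine sum_congr rfl fun i _ ↦ ?_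
    rw [fwdDiff_iter_const_smul, Pi.smul_apply, nsmul_eq_mul]
  simp only [stirlingS2_eq_fwdDiff_iter, hΔ, Nat.factorial_succ, Nat.cast_mul, ← sum_div,
    mul_div_assoc']
  field_simp
  push_cast
  ring

lemma sum_choose_mul_stirlingS2_sub (n k : ℕ) :
    ∑ i ∈ Icc 1 n, n.choose i * stirlingS2 (n - i) k = (k + 1 : ℝ) * stirlingS2 n (k + 1) := by
  have hsymm : ∀ i ∈ Icc 1 n, (n.choose i : ℝ) * stirlingS2 (n - i) k =
      n.choose (n - i) * stirlingS2 (n - i) k := fun i hi ↦ by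
    rw [Nat.choose_symm (mem_Icc.mp hi).2]
  rw [sum_congr rfl hsymm, ← Ico_add_one_right_eq_Icc,
    sum_Ico_reflect (fun i ↦ (n.choose i : ℝ) * stirlingS2 i k) 1 le_rfl,
    Nat.sub_self, Nat.add_sub_cancel, ← range_eq_Ico, succ_mul_stirlingS2_succ]

lemma multiOrder_eq_degree (ν : ℕ →₀ ℕ) : multiOrder ν = ν.degree := rfl

lemma multiOrder_add (m m' : ℕ →₀ ℕ) : multiOrder (m + m') = multiOrder m + multiOrder m' :=
  map_add Finsupp.degree m m'

lemma multiOrder_single (j k : ℕ) : multiOrder (single j k) = k :=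
  Finsupp.degree_single j k

lemma multiOrder_sub_single_add {ν : ℕ →₀ ℕ} {j k : ℕ} (h : k ≤ ν j) :
    multiOrder (ν - single j k) + k = multiOrder ν := by
  simpa [multiOrder_add, multiOrder_single] using
    congrArg multiOrder (tsub_add_cancel_of_le (Finsupp.single_le_iff.mpr h))

lemma multiPow_add (Υ : ℕ → ℝ) (m m' : ℕ →₀ ℕ) :
    multiPow Υ (m + m') = multiPow Υ m * multiPow Υ m' :=
  Finsupp.prod_add_index' (fun _ ↦ pow_zero _) (fun _ _ _ ↦ pow_add _ _ _)

lemma multiPow_single (Υ : ℕ → ℝ) (j k : ℕ) : multiPow Υ (single j k) = Υ j ^ k :=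
  Finsupp.prod_single_index (pow_zero _)


lemma sum_Iic_add_single {ι M : Type*} [DecidableEq ι] [AddCommMonoid M] (ν : ι →₀ ℕ) (j : ι)
    {g : (ι →₀ ℕ) → M} (hg₀ : ∀ m, m j = 0 → g m = 0) (hgν : ∀ m, ν j < m j → g m = 0) :
    ∑ m ∈ Iic ν, g (m + single j 1) = ∑ m ∈ Iic ν, g m := by
  refine sum_bij_ne_zero (fun m _ _ ↦ m + single j 1) ?_ ?_ ?_ (fun _ _ _ ↦ rfl)
  · intro m hm hgm
    rw [mem_Iic]
    intro i
    have hmj : m j < ν j := by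
      by_contra! h
      exact hgm (hgν _ (by simpa using Nat.lt_succ_of_le h))
    have := mem_Iic.mp hm i
    rcases eq_or_ne j i with rfl | hij
    · simpa using hmj
    · simpa [Finsupp.single_apply, hij] using this
  · intro m _ _ m' _ _ h
    exact add_right_cancel h
  · intro m hm hgm
    have hmj : 1 ≤ m j := Nat.one_le_iff_ne_zero.mpr fun h ↦ hgm (hg₀ m h)
    have hadd : m - single j 1 + single j 1 = m :=
      tsub_add_cancel_of_le (Finsupp.single_le_iff.mpr hmj)
    exact ⟨m - single j 1, mem_Iic.mpr (tsub_le_self.trans (mem_Iic.mp hm)),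
      by rwa [hadd], hadd⟩

lemma prod_stirlingS2_eq_zero_of_lt {s : Finset ℕ} {ν m : ℕ →₀ ℕ} {i : ℕ} (hi : i ∈ s)
    (h : ν i < m i) : ∏ i ∈ s, stirlingS2 (ν i) (m i) = 0 :=
  prod_eq_zero hi (stirlingS2_eq_zero_of_lt h)

section

variable (Υ : ℕ → ℝ)

noncomputable def stirlingBound (ν : ℕ →₀ ℕ) : ℝ :=
  ∑ m ∈ Iic ν, ((multiOrder m).factorial : ℝ) * multiPow Υ m *
    ∏ i ∈ ν.support, stirlingS2 (ν i) (m i)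

lemma stirlingBound_zero : stirlingBound Υ 0 = 1 := by
  rw [stirlingBound, ← bot_eq_zero, Iic_bot, bot_eq_zero]
  simp [multiOrder, multiPow]

lemma stirlingBound_eq_sum_Iic_of_le {μ ν : ℕ →₀ ℕ} (h : μ ≤ ν) :
    stirlingBound Υ μ = ∑ m ∈ Iic ν, ((multiOrder m).factorial : ℝ) * multiPow Υ m *
      ∏ i ∈ ν.support, stirlingS2 (μ i) (m i) := by
  refine sum_subset_zero_on_sdiff (Iic_subset_Iic.mpr h) (fun m hm ↦ ?_) (fun m hm ↦ ?_)
  · obtain ⟨hmν, hmμ⟩ : m ≤ ν ∧ ¬ m ≤ μ := by simpa using hm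
    obtain ⟨i, hi⟩ : ∃ i, μ i < m i := by simpa [Finsupp.le_def] using hmμ
    have hiν : i ∈ ν.support := Finsupp.mem_support_iff.mpr (by have := hmν i; omega)
    rw [prod_stirlingS2_eq_zero_of_lt hiν hi, mul_zero]
  · congr 1
    refine prod_subset (Finsupp.support_mono h) fun i _ hi ↦ ?_
    have hμi : μ i = 0 := Finsupp.notMem_support_iff.mp hi
    have hmi : m i = 0 := by have := mem_Iic.mp hm i; omega
    rw [hμi, hmi, stirlingS2_zero_zero]

lemma stirlingBound_eq_sum_support {ν : ℕ →₀ ℕ} (hν : ν ≠ 0) :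
    stirlingBound Υ ν = ∑ j ∈ ν.support, ∑ m ∈ Iic ν, (m j : ℝ) *
      (multiOrder m - 1).factorial * multiPow Υ m * ∏ i ∈ ν.support, stirlingS2 (ν i) (m i) := by
  rw [stirlingBound, sum_comm]
  refine sum_congr rfl fun m hm ↦ ?_
  simp only [← sum_mul]
  rcases eq_or_ne m 0 with rfl | hm₀
  · obtain ⟨j, hj⟩ := Finsupp.support_nonempty_iff.mpr hν
    rw [prod_eq_zero (f := fun i ↦ stirlingS2 (ν i) ((0 : ℕ →₀ ℕ) i)) hj
      (stirlingS2_zero_right (Finsupp.mem_support_iff.mp hj)), mul_zero, mul_zero]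
  · have horder : ∑ j ∈ ν.support, (m j : ℝ) = multiOrder m := by
      rw [multiOrder_eq_degree, Finsupp.degree_apply, Nat.cast_sum]
      exact (sum_subset (Finsupp.support_mono (mem_Iic.mp hm))
        fun i _ hi ↦ by simp [Finsupp.notMem_support_iff.mp hi]).symm
    have hpos : multiOrder m ≠ 0 := by
      rwa [multiOrder_eq_degree, Ne, Finsupp.degree_eq_zero_iff]
    rw [horder, ← Nat.cast_mul, Nat.mul_factorial_pred hpos]

lemma mul_sum_choose_mul_stirlingBound_sub_single {ν : ℕ →₀ ℕ} {j : ℕ} (hj : j ∈ ν.support) :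
    Υ j * ∑ k ∈ Icc 1 (ν j), (ν j).choose k * stirlingBound Υ (ν - single j k) =
      ∑ m ∈ Iic ν, (m j : ℝ) * (multiOrder m - 1).factorial * multiPow Υ m *
        ∏ i ∈ ν.support, stirlingS2 (ν i) (m i) := by
  set g : (ℕ →₀ ℕ) → ℝ := fun m ↦ (m j : ℝ) * (multiOrder m - 1).factorial * multiPow Υ m *
    ∏ i ∈ ν.support, stirlingS2 (ν i) (m i) with hg
  set P : (ℕ →₀ ℕ) → ℝ := fun m ↦ ∏ i ∈ ν.support.erase j, stirlingS2 (ν i) (m i)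
  have hsplit (k : ℕ) : stirlingBound Υ (ν - single j k) = ∑ m ∈ Iic ν,
      (multiOrder m).factorial * multiPow Υ m * (stirlingS2 (ν j - k) (m j) * P m) := by
    rw [stirlingBound_eq_sum_Iic_of_le Υ tsub_le_self]
    refine sum_congr rfl fun m _ ↦ ?_
    rw [← mul_prod_erase _ _ hj]
    congr 2
    · simp
    · refine prod_congr rfl fun i hi ↦ ?_
      simp [(ne_of_mem_erase hi).symm]
  have hshift (m : ℕ →₀ ℕ) :
      ∏ i ∈ ν.support, stirlingS2 (ν i) ((m + single j 1 : ℕ →₀ ℕ) i) =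
        stirlingS2 (ν j) (m j + 1) * P m := by
    rw [← mul_prod_erase _ _ hj]
    congr 1
    · simp
    · refine prod_congr rfl fun i hi ↦ ?_
      simp [(ne_of_mem_erase hi).symm]
  calc Υ j * ∑ k ∈ Icc 1 (ν j), (ν j).choose k * stirlingBound Υ (ν - single j k)
      = ∑ m ∈ Iic ν, Υ j * (multiOrder m).factorial * multiPow Υ m * P m *
          ∑ k ∈ Icc 1 (ν j), (ν j).choose k * stirlingS2 (ν j - k) (m j) := by
        simp only [hsplit, mul_sum]
        rw [sum_comm]
        refine sum_congr rfl fun m _ ↦ sum_congr rfl fun k _ ↦ by ring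
    _ = ∑ m ∈ Iic ν, g (m + single j 1) := by
        refine sum_congr rfl fun m _ ↦ ?_
        simp only [hg]
        rw [sum_choose_mul_stirlingS2_sub, hshift, multiPow_add, multiPow_single,
          multiOrder_add, multiOrder_single, Nat.add_sub_cancel]
        simp only [Finsupp.add_apply, Finsupp.single_eq_same, Nat.cast_add, Nat.cast_one]
        ring
    _ = ∑ m ∈ Iic ν, g m := by
        refine sum_Iic_add_single ν j (fun m hm ↦ ?_) fun m hm ↦ ?_
        · simp [hg, hm]
        simp only [hg]
        rw [prod_stirlingS2_eq_zero_of_lt hj hm, mul_zero]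

theorem stirlingBound_eq_sum_sub_single {ν : ℕ →₀ ℕ} (hν : ν ≠ 0) :
    stirlingBound Υ ν = ∑ j ∈ ν.support,
      Υ j * ∑ k ∈ Icc 1 (ν j), (ν j).choose k * stirlingBound Υ (ν - single j k) := by
  rw [stirlingBound_eq_sum_support Υ hν]
  exact sum_congr rfl fun j hj ↦ (mul_sum_choose_mul_stirlingBound_sub_single Υ hj).symm

end

theorem stmt_0_general (B c : ℝ) (hc : 0 < c)
    (A : (ℕ →₀ ℕ) → ℝ)
    (Υ : ℕ → ℝ) (hΥ : ∀ j, 0 ≤ Υ j)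
    (h0 : A 0 ≤ B)
    (hrec : ∀ ν : ℕ →₀ ℕ, ν ≠ 0 →
      A ν ≤ ∑ j ∈ ν.support, ∑ k ∈ Finset.Icc 1 (ν j),
        ((ν j).choose k : ℝ) * c ^ k * Υ j * A (ν - Finsupp.single j k)) :
    ∀ ν : ℕ →₀ ℕ,
      A ν ≤ c ^ multiOrder ν * B *
        ∑ m ∈ Finset.Iic ν,
          ((multiOrder m).factorial : ℝ) * multiPow Υ m *
            ∏ i ∈ ν.support, stirlingS2 (ν i) (m i) := by
  intro ν
  induction ν using WellFoundedLT.induction with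
  | ind ν ih =>
  change A ν ≤ c ^ multiOrder ν * B * stirlingBound Υ ν
  rcases eq_or_ne ν 0 with rfl | hν
  · simpa [stirlingBound_zero, multiOrder] using h0
  calc A ν ≤ ∑ j ∈ ν.support, ∑ k ∈ Icc 1 (ν j), ((ν j).choose k : ℝ) * c ^ k * Υ j *
        (c ^ multiOrder (ν - single j k) * B * stirlingBound Υ (ν - single j k)) := by
        refine (hrec ν hν).trans (sum_le_sum fun j _ ↦ sum_le_sum fun k hk ↦ ?_)
        have hkν : 0 < k ∧ k ≤ ν j := mem_Icc.mp hk
        have hlt : ν - single j k < ν :=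
          tsub_le_self.lt_of_ne fun h ↦ by
            have := DFunLike.congr_fun h j
            simp only [Finsupp.tsub_apply, Finsupp.single_eq_same] at this
            omega
        have hΥj := hΥ j
        gcongr
        exact ih _ hlt
    _ = c ^ multiOrder ν * B * ∑ j ∈ ν.support,
          Υ j * ∑ k ∈ Icc 1 (ν j), (ν j).choose k * stirlingBound Υ (ν - single j k) := by
        simp only [mul_sum]
        refine sum_congr rfl fun j _ ↦ sum_congr rfl fun k hk ↦ ?_
        rw [← multiOrder_sub_single_add (mem_Icc.mp hk).2, pow_add]
        ring
    _ = c ^ multiOrder ν * B * stirlingBound Υ ν := by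
        rw [← stirlingBound_eq_sum_sub_single Υ hν]

theorem stmt_0 (B c : ℝ) (hB : 0 < B) (hc : 0 < c)
    (A : (ℕ →₀ ℕ) → ℝ) (hA : ∀ ν, 0 ≤ A ν)
    (Υ : ℕ → ℝ) (hΥ : ∀ j, 0 ≤ Υ j)
    (h0 : A 0 ≤ B)
    (hrec : ∀ ν : ℕ →₀ ℕ, ν ≠ 0 →
      A ν ≤ ∑ j ∈ ν.support, ∑ k ∈ Finset.Icc 1 (ν j),
        ((ν j).choose k : ℝ) * c ^ k * Υ j * A (ν - Finsupp.single j k)) :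
    ∀ ν : ℕ →₀ ℕ,
      A ν ≤ c ^ multiOrder ν * B *
        ∑ m ∈ Finset.Iic ν,
          ((multiOrder m).factorial : ℝ) * multiPow Υ m *
            ∏ i ∈ ν.support, stirlingS2 (ν i) (m i) :=
  stmt_0_general B c hc A Υ hΥ h0 hrec
end

section
/- Let Y be a random variable uniformly distributed on [−1/2, 1/2]. Then the distribution of sin(2πY) is absolutely continuous with respect to Lebesgue measure on ℝ, with probability density function y ↦ 1/(π√(1−y²)) for −1 < y < 1 and 0 otherwise; equivalently, the pushforward of the uniform probability measure on [−1/2, 1/2] under the map y ↦ sin(2πy) has density 1/(π√(1−y²)) on (−1, 1). -/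
/-!
By periodicity, the law of `sin (2πY)` does not change if `Y` is uniform on `(-1/4, 3/4]` instead.
There `x ↦ sin (2πx)` has two monotone branches, on `(-1/4, 1/4)` and on `(1/4, 3/4)`, each mapping
onto `(-1, 1)`; at `y = sin (2πx)` the derivative has absolute value `2π |cos (2πx)| = 2π √(1 - y²)`,
so by the change of variables formula each branch contributes the density `1 / (2π √(1 - y²))`.
-/

open MeasureTheory Real

/-- The uniform probability measure on `[-1/2, 1/2]`. -/
noncomputable def unifHalf : Measure ℝ := volume.restrict (Set.Icc (-(1/2) : ℝ) (1/2))

open Set Function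
open scoped ENNReal

theorem Function.Periodic.map_volume_restrict_Ioc_eq {α : Type*} [MeasurableSpace α]
    {f : ℝ → α} {T : ℝ} (hf : Periodic f T) (hT : 0 < T) (hmeas : Measurable f) (t s : ℝ) :
    (volume.restrict (Ioc t (t + T))).map f = (volume.restrict (Ioc s (s + T))).map f := by
  ext B hB
  rw [Measure.map_apply hmeas hB, Measure.map_apply hmeas hB,
    Measure.restrict_apply (hmeas hB), Measure.restrict_apply (hmeas hB)]
  refine (isAddFundamentalDomain_Ioc hT t).measure_set_eq (isAddFundamentalDomain_Ioc hT s)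
    (hmeas hB) ?_
  rintro ⟨_, n, rfl⟩
  ext x
  simp [add_comm _ x, hf.int_mul n x]

theorem map_volume_restrict_eq_withDensity_of_injOn {f f' : ℝ → ℝ} {ρ : ℝ → ℝ≥0∞} {s : Set ℝ}
    (hf : Measurable f) (hs : MeasurableSet s) (hf' : ∀ x ∈ s, HasDerivWithinAt f (f' x) s x)
    (hinj : InjOn f s) (hρ : ∀ x ∈ s, ENNReal.ofReal |f' x| * ρ (f x) = 1) :
    (volume.restrict s).map f = volume.withDensity ((f '' s).indicator ρ) := by
  ext A hA
  have hsA : MeasurableSet (s ∩ f ⁻¹' A) := hs.inter (hf hA)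
  have himage : MeasurableSet (f '' s) :=
    measurable_image_of_fderivWithin hs (fun x hx => (hf' x hx).hasFDerivWithinAt) hinj
  calc (volume.restrict s).map f A = volume (s ∩ f ⁻¹' A) := by
        rw [Measure.map_apply hf hA, Measure.restrict_apply (hf hA), inter_comm]
    _ = ∫⁻ x in s ∩ f ⁻¹' A, ENNReal.ofReal |f' x| * ρ (f x) := by
        rw [setLIntegral_congr_fun hsA (fun x hx => hρ x hx.1), setLIntegral_one]
    _ = ∫⁻ y in f '' (s ∩ f ⁻¹' A), ρ y :=
        (lintegral_image_eq_lintegral_abs_deriv_mul hsA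
          (fun x hx => (hf' x hx.1).mono inter_subset_left) (hinj.mono inter_subset_left) ρ).symm
    _ = ∫⁻ y in A, (f '' s).indicator ρ y := by
        rw [setLIntegral_indicator himage, image_inter_preimage, inter_comm]
    _ = volume.withDensity ((f '' s).indicator ρ) A := (withDensity_apply _ hA).symm

noncomputable def sinTwoPi (y : ℝ) : ℝ := sin (2 * π * y)

lemma continuous_sinTwoPi : Continuous sinTwoPi := by unfold sinTwoPi; fun_prop

lemma periodic_sinTwoPi : Periodic sinTwoPi 1 := fun y => by
  simp only [sinTwoPi, mul_add, mul_one, sin_add_two_pi]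

lemma hasDerivAt_sinTwoPi (x : ℝ) : HasDerivAt sinTwoPi (cos (2 * π * x) * (2 * π)) x := by
  unfold sinTwoPi
  simpa using ((hasDerivAt_id x).const_mul (2 * π)).sin

lemma cos_two_pi_mul_pos {x : ℝ} (hx : x ∈ Ioo (-(1/4) : ℝ) (1/4)) : 0 < cos (2 * π * x) :=
  cos_pos_of_mem_Ioo ⟨by nlinarith [hx.1, pi_pos], by nlinarith [hx.2, pi_pos]⟩

lemma cos_two_pi_mul_neg {x : ℝ} (hx : x ∈ Ioo (1/4 : ℝ) (3/4)) : cos (2 * π * x) < 0 :=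
  cos_neg_of_pi_div_two_lt_of_lt (by nlinarith [hx.1, pi_pos]) (by nlinarith [hx.2, pi_pos])

lemma strictMonoOn_sinTwoPi : StrictMonoOn sinTwoPi (Icc (-(1/4) : ℝ) (1/4)) := by
  refine strictMonoOn_of_deriv_pos (convex_Icc _ _) continuous_sinTwoPi.continuousOn fun x hx => ?_
  rw [interior_Icc] at hx
  rw [(hasDerivAt_sinTwoPi x).deriv]
  exact mul_pos (cos_two_pi_mul_pos hx) two_pi_pos

lemma strictAntiOn_sinTwoPi : StrictAntiOn sinTwoPi (Icc (1/4 : ℝ) (3/4)) := by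
  refine strictAntiOn_of_deriv_neg (convex_Icc _ _) continuous_sinTwoPi.continuousOn fun x hx => ?_
  rw [interior_Icc] at hx
  rw [(hasDerivAt_sinTwoPi x).deriv]
  exact mul_neg_of_neg_of_pos (cos_two_pi_mul_neg hx) two_pi_pos

lemma sinTwoPi_neg_quarter : sinTwoPi (-(1/4)) = -1 := by
  rw [sinTwoPi, show 2 * π * (-(1/4)) = -(π / 2) by ring, sin_neg, sin_pi_div_two]

lemma sinTwoPi_quarter : sinTwoPi (1/4) = 1 := by
  rw [sinTwoPi, show 2 * π * (1/4) = π / 2 by ring, sin_pi_div_two]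

lemma sinTwoPi_three_quarters : sinTwoPi (3/4) = -1 := by
  rw [sinTwoPi, show 2 * π * (3/4) = π / 2 + π by ring, sin_add_pi, sin_pi_div_two]

lemma image_sinTwoPi_Ioo_neg_quarter_quarter : sinTwoPi '' Ioo (-(1/4)) (1/4) = Ioo (-1) 1 := by
  rw [continuous_sinTwoPi.continuousOn.image_Ioo_of_strictMonoOn (by norm_num)
    strictMonoOn_sinTwoPi, sinTwoPi_neg_quarter, sinTwoPi_quarter]

lemma image_sinTwoPi_Ioo_quarter_three_quarters : sinTwoPi '' Ioo (1/4) (3/4) = Ioo (-1) 1 := by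
  rw [continuous_sinTwoPi.continuousOn.image_Ioo_of_strictAntiOn (by norm_num)
    strictAntiOn_sinTwoPi, sinTwoPi_three_quarters, sinTwoPi_quarter]

noncomputable def sinTwoPiBranchDensity (y : ℝ) : ℝ≥0∞ := ENNReal.ofReal (1 / (2 * π * √(1 - y ^ 2)))

lemma measurable_sinTwoPiBranchDensity : Measurable sinTwoPiBranchDensity := by
  unfold sinTwoPiBranchDensity; fun_prop

lemma map_sinTwoPi_volume_restrict_Ioo {a b : ℝ} (hinj : InjOn sinTwoPi (Ioo a b))
    (hcos : ∀ x ∈ Ioo a b, cos (2 * π * x) ≠ 0) :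
    (volume.restrict (Ioo a b)).map sinTwoPi
      = volume.withDensity ((sinTwoPi '' Ioo a b).indicator sinTwoPiBranchDensity) := by
  refine map_volume_restrict_eq_withDensity_of_injOn continuous_sinTwoPi.measurable
    measurableSet_Ioo (fun x _ => (hasDerivAt_sinTwoPi x).hasDerivWithinAt) hinj fun x hx => ?_
  have hsqrt : √(1 - sinTwoPi x ^ 2) = |cos (2 * π * x)| := (abs_cos_eq_sqrt_one_sub_sin_sq _).symm
  rw [sinTwoPiBranchDensity, ← ENNReal.ofReal_mul (abs_nonneg _), hsqrt, abs_mul,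
    abs_of_pos two_pi_pos, mul_comm |cos _|, mul_one_div_cancel, ENNReal.ofReal_one]
  exact mul_ne_zero two_pi_pos.ne' (abs_ne_zero.2 (hcos x hx))

lemma indicator_sinTwoPiBranchDensity_add_self (y : ℝ) :
    (Ioo (-1) 1).indicator sinTwoPiBranchDensity y + (Ioo (-1) 1).indicator sinTwoPiBranchDensity y
      = ENNReal.ofReal ((Ioo (-1 : ℝ) 1).indicator (fun y => 1 / (π * √(1 - y ^ 2))) y) := by
  by_cases hy : y ∈ Ioo (-1 : ℝ) 1
  · rw [indicator_of_mem hy, indicator_of_mem hy, sinTwoPiBranchDensity,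
      ← ENNReal.ofReal_add (by positivity) (by positivity)]
    congr 1
    field_simp
    ring
  · simp [indicator_of_notMem hy]

lemma map_sinTwoPi_unifHalf :
    unifHalf.map sinTwoPi = (volume.restrict (Ioo (-(1/4)) (1/4))).map sinTwoPi
      + (volume.restrict (Ioo (1/4) (3/4))).map sinTwoPi := by
  have hmeas := continuous_sinTwoPi.measurable
  calc unifHalf.map sinTwoPi = (volume.restrict (Ioc (-(1/2)) (-(1/2) + 1))).map sinTwoPi := by
        norm_num [unifHalf, restrict_Ioc_eq_restrict_Icc]
    _ = (volume.restrict (Ioc (-(1/4)) (-(1/4) + 1))).map sinTwoPi :=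
        periodic_sinTwoPi.map_volume_restrict_Ioc_eq one_pos hmeas _ _
    _ = _ := by
        rw [show (-(1/4) + 1 : ℝ) = 3/4 by norm_num,
          ← Ioc_union_Ioc_eq_Ioc (by norm_num) (by norm_num : (1/4 : ℝ) ≤ 3/4),
          Measure.restrict_union (Ioc_disjoint_Ioc_of_le le_rfl) measurableSet_Ioc,
          Measure.map_add _ _ hmeas, restrict_Ioo_eq_restrict_Ioc,
          restrict_Ioo_eq_restrict_Ioc]

theorem stmt_3 :
    Measure.map (fun y : ℝ => Real.sin (2 * π * y)) unifHalf
        = volume.withDensity (fun y : ℝ =>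
            ENNReal.ofReal
              (Set.indicator (Set.Ioo (-1 : ℝ) 1)
                (fun y => 1 / (π * Real.sqrt (1 - y ^ 2))) y)) ∧
      Measure.map (fun y : ℝ => Real.sin (2 * π * y)) unifHalf ≪ volume := by
  have hmap : unifHalf.map sinTwoPi = volume.withDensity (fun y : ℝ =>
      ENNReal.ofReal ((Ioo (-1 : ℝ) 1).indicator (fun y => 1 / (π * √(1 - y ^ 2))) y)) := by
    rw [map_sinTwoPi_unifHalf,
      map_sinTwoPi_volume_restrict_Ioo (strictMonoOn_sinTwoPi.injOn.mono Ioo_subset_Icc_self)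
        fun x hx => (cos_two_pi_mul_pos hx).ne',
      map_sinTwoPi_volume_restrict_Ioo (strictAntiOn_sinTwoPi.injOn.mono Ioo_subset_Icc_self)
        fun x hx => (cos_two_pi_mul_neg hx).ne,
      image_sinTwoPi_Ioo_neg_quarter_quarter, image_sinTwoPi_Ioo_quarter_three_quarters,
      ← withDensity_add_left (measurable_sinTwoPiBranchDensity.indicator measurableSet_Ioo)]
    exact congrArg _ (funext indicator_sinTwoPiBranchDensity_add_self)
  exact ⟨hmap, hmap ▸ withDensity_absolutelyContinuous _ _⟩
end

section
/- Let (Y_j)_{j≥1} be a sequence of independent random variables on a probability space, each uniformly distributed on [−1/2, 1/2], and let (a_j)_{j≥1} be a real sequence with ∑_{j≥1} |a_j| < ∞. Then the fourth moment of the almost surely absolutely convergent random series Z := ∑_{j≥1} (1/√6) sin(2π Y_j) a_j satisfies E[Z⁴] = (1/96) ∑_{j≥1} a_j⁴ + (1/24) ∑_{j≥1} ∑_{k≥j+1} a_j² a_k². -/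
open MeasureTheory ProbabilityTheory Real Filter Topology Finset

/-!
The summands `X j = sin (2π Y j) a j / √6` are independent, bounded and centred, with
`E[X j ^ 2] = a j ^ 2 / 12` and `E[X j ^ 4] = a j ^ 4 / 96` (from `∫ sin² = π`, `∫ sin⁴ = 3π/4`
over a period). For independent centred `S` and `X` the odd cross terms of `(S + X) ^ 4` vanish, so
`E[(S + X) ^ 4] = E[S ^ 4] + 6 E[S ^ 2] E[X ^ 2] + E[X ^ 4]`; by induction this gives the formula
for the partial sums, which are dominated by `∑ |a j| / √6`, so dominated convergence passes to the
limit.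
-/

lemma summable_sq_of_summable_abs {ι : Type*} {a : ι → ℝ} (ha : Summable fun j => |a j|) :
    Summable fun j => a j ^ 2 := by
  refine .of_nonneg_of_le (fun j => sq_nonneg _) (fun j => ?_) (ha.mul_left (∑' j, |a j|))
  rw [← sq_abs, sq]
  exact mul_le_mul_of_nonneg_right (ha.le_tsum j fun _ _ => abs_nonneg _) (abs_nonneg _)

lemma HasSum.tendsto_sum_range_sum_range {M : Type*} [AddCommMonoid M] [TopologicalSpace M]
    {f : ℕ × ℕ → M} {s : M} (hf : HasSum f s) :
    Tendsto (fun N => ∑ j ∈ range N, ∑ k ∈ range N, f (j, k)) atTop (𝓝 s) := by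
  have hsquares : Tendsto (fun N => range N ×ˢ range N) atTop atTop :=
    tendsto_atTop_finset_of_monotone
      (fun _ _ h => product_subset_product (range_subset_range.2 h) (range_subset_range.2 h))
      fun p => ⟨max p.1 p.2 + 1, by simp only [mem_product, mem_range]; omega⟩
  simpa only [Function.comp_def, sum_product] using hf.comp hsquares

lemma sum_range_succ_sum_range_succ_ite_lt {M : Type*} [AddCommMonoid M] (f : ℕ → ℕ → M)
    (N : ℕ) :
    ∑ j ∈ range (N + 1), ∑ k ∈ range (N + 1), (if j < k then f j k else 0)
      = ∑ j ∈ range N, ∑ k ∈ range N, (if j < k then f j k else 0) + ∑ j ∈ range N, f j N := by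
  have hlast : ∑ k ∈ range N, (if N < k then f N k else 0) = 0 :=
    sum_eq_zero fun k hk => if_neg (by simp at hk; omega)
  have hnew : ∑ j ∈ range N, (if j < N then f j N else 0) = ∑ j ∈ range N, f j N :=
    sum_congr rfl fun j hj => if_pos (mem_range.1 hj)
  simp only [sum_range_succ _ N, sum_add_distrib, hlast, hnew, lt_irrefl, if_false, add_zero]

section Moments

variable {Ω : Type*} [MeasurableSpace Ω] {P : Measure Ω}

lemma MeasureTheory.MemLp.integrable_pow_of_le [IsFiniteMeasure P] {X : Ω → ℝ} {p k : ℕ}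
    (hX : MemLp X p P) (hk : k ≤ p) : Integrable (fun ω => X ω ^ k) P := by
  have hXk : MemLp X k P := hX.mono_exponent (by exact_mod_cast hk)
  refine (integrable_norm_iff (hX.1.pow k)).1 ?_
  simpa only [Pi.pow_apply, norm_pow] using hXk.integrable_norm_pow'

lemma ProbabilityTheory.IndepFun.integral_add_pow [IsFiniteMeasure P] {S X : Ω → ℝ}
    (hSX : IndepFun S X P) {n : ℕ} (hS : MemLp S n P) (hX : MemLp X n P) :
    ∫ ω, (S ω + X ω) ^ n ∂P
      = ∑ k ∈ range (n + 1), n.choose k * (∫ ω, S ω ^ k ∂P) * ∫ ω, X ω ^ (n - k) ∂P := by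
  have hpow (k : ℕ) : IndepFun (fun ω => S ω ^ k) (fun ω => X ω ^ (n - k)) P :=
    hSX.comp (measurable_id.pow_const k) (measurable_id.pow_const (n - k))
  have hint : ∀ k ∈ range (n + 1),
      Integrable (fun ω => S ω ^ k * X ω ^ (n - k) * n.choose k) P := fun k hk =>
    ((hpow k).integrable_mul (hS.integrable_pow_of_le (by simp at hk; omega))
      (hX.integrable_pow_of_le (n.sub_le k))).mul_const _
  simp_rw [add_pow]
  rw [integral_finsetSum _ hint]
  refine sum_congr rfl fun k _ => ?_
  rw [integral_mul_const,
    (hpow k).integral_fun_mul_eq_mul_integral (hS.1.pow k) (hX.1.pow _)]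
  ring

lemma tendsto_integral_sum_range_pow [IsFiniteMeasure P] {X : ℕ → Ω → ℝ} {b : ℕ → ℝ}
    (hX : ∀ j, AEStronglyMeasurable (X j) P) (hXb : ∀ j ω, |X j ω| ≤ b j) (hb : Summable b)
    (n : ℕ) :
    Tendsto (fun N => ∫ ω, (∑ j ∈ range N, X j ω) ^ n ∂P) atTop
      (𝓝 (∫ ω, (∑' j, X j ω) ^ n ∂P)) := by
  have hpartial (N : ℕ) (ω : Ω) : |∑ j ∈ range N, X j ω| ≤ ∑' j, |b j| :=
    (abs_sum_le_sum_abs _ _).trans <|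
      (sum_le_sum fun j _ => (hXb j ω).trans (le_abs_self _)).trans <|
        hb.abs.sum_le_tsum _ fun j _ => abs_nonneg _
  refine tendsto_integral_of_dominated_convergence (fun _ => (∑' j, |b j|) ^ n)
    (fun N => ((range N).aestronglyMeasurable_fun_sum fun j _ => hX j).pow n) (integrable_const _)
    (fun N => ae_of_all _ fun ω => ?_) (ae_of_all _ fun ω => ?_)
  · rw [norm_pow, norm_eq_abs]
    exact pow_le_pow_left₀ (abs_nonneg _) (hpartial N ω) n
  · exact ((Summable.of_norm_bounded hb (hXb · ω)).hasSum.tendsto_sum_nat).pow n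

variable [IsProbabilityMeasure P]

lemma ProbabilityTheory.IndepFun.integral_add_sq {S X : Ω → ℝ} (hSX : IndepFun S X P)
    (hS : MemLp S 2 P) (hX : MemLp X 2 P) (hX0 : ∫ ω, X ω ∂P = 0) :
    ∫ ω, (S ω + X ω) ^ 2 ∂P = ∫ ω, S ω ^ 2 ∂P + ∫ ω, X ω ^ 2 ∂P := by
  rw [hSX.integral_add_pow hS hX]
  simp [sum_range_succ, hX0, add_comm]

lemma ProbabilityTheory.IndepFun.integral_add_pow_four {S X : Ω → ℝ} (hSX : IndepFun S X P)
    (hS : MemLp S 4 P) (hX : MemLp X 4 P) (hS0 : ∫ ω, S ω ∂P = 0) (hX0 : ∫ ω, X ω ∂P = 0) :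
    ∫ ω, (S ω + X ω) ^ 4 ∂P
      = ∫ ω, S ω ^ 4 ∂P + 6 * (∫ ω, S ω ^ 2 ∂P) * (∫ ω, X ω ^ 2 ∂P) + ∫ ω, X ω ^ 4 ∂P := by
  rw [hSX.integral_add_pow hS hX]
  simp only [sum_range_succ, range_one, sum_singleton, Nat.choose, Nat.reduceAdd, Nat.reduceSub,
    pow_zero, pow_one, integral_const, probReal_univ, smul_eq_mul, hS0, hX0]
  ring

lemma ProbabilityTheory.iIndepFun.integral_sum_range_sq {X : ℕ → Ω → ℝ} (hind : iIndepFun X P)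
    (hX : ∀ j, MemLp (X j) 2 P) (hX0 : ∀ j, ∫ ω, X j ω ∂P = 0) (N : ℕ) :
    ∫ ω, (∑ j ∈ range N, X j ω) ^ 2 ∂P = ∑ j ∈ range N, ∫ ω, X j ω ^ 2 ∂P := by
  induction N with
  | zero => simp
  | succ N ih =>
    have hindN := hind.indepFun_sum_range_succ₀ (fun j => (hX j).1.aemeasurable) N
    rw [sum_fn] at hindN
    simp_rw [sum_range_succ]
    rw [hindN.integral_add_sq (memLp_finsetSum _ fun j _ => hX j) (hX N) (hX0 N), ih]

lemma ProbabilityTheory.iIndepFun.integral_sum_range_pow_four {X : ℕ → Ω → ℝ}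
    (hind : iIndepFun X P) (hX : ∀ j, MemLp (X j) 4 P) (hX0 : ∀ j, ∫ ω, X j ω ∂P = 0) (N : ℕ) :
    ∫ ω, (∑ j ∈ range N, X j ω) ^ 4 ∂P
      = ∑ j ∈ range N, ∫ ω, X j ω ^ 4 ∂P
        + 6 * ∑ j ∈ range N, ∑ k ∈ range N,
          (if j < k then (∫ ω, X j ω ^ 2 ∂P) * ∫ ω, X k ω ^ 2 ∂P else 0) := by
  have hX2 (j : ℕ) : MemLp (X j) 2 P := (hX j).mono_exponent (by norm_num)
  induction N with
  | zero => simp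
  | succ N ih =>
    have hindN := hind.indepFun_sum_range_succ₀ (fun j => (hX j).1.aemeasurable) N
    rw [sum_fn] at hindN
    have hS0 : ∫ ω, ∑ j ∈ range N, X j ω ∂P = 0 := by
      rw [integral_finsetSum _ fun j _ => (hX j).integrable (by norm_num)]
      exact sum_eq_zero fun j _ => hX0 j
    rw [sum_range_succ_sum_range_succ_ite_lt]
    simp_rw [sum_range_succ]
    rw [hindN.integral_add_pow_four (memLp_finsetSum _ fun j _ => hX j) (hX N) hS0 (hX0 N), ih,
      hind.integral_sum_range_sq hX2 hX0, ← sum_mul]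
    ring

end Moments

lemma setIntegral_Icc_sin_two_pi_mul_pow (m : ℕ) :
    ∫ y in Set.Icc (-(1 / 2) : ℝ) (1 / 2), sin (2 * π * y) ^ m
      = (2 * π)⁻¹ * ∫ x in -π..π, sin x ^ m := by
  rw [integral_Icc_eq_integral_Ioc, ← intervalIntegral.integral_of_le (by norm_num),
    intervalIntegral.integral_comp_mul_left (fun x => sin x ^ m) (by positivity), smul_eq_mul,
    show 2 * π * (-(1 / 2)) = -π by ring, show 2 * π * (1 / 2) = π by ring]

lemma setIntegral_Icc_sin_two_pi_mul :
    ∫ y in Set.Icc (-(1 / 2) : ℝ) (1 / 2), sin (2 * π * y) = 0 := by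
  simpa using setIntegral_Icc_sin_two_pi_mul_pow 1

lemma setIntegral_Icc_sin_two_pi_mul_sq :
    ∫ y in Set.Icc (-(1 / 2) : ℝ) (1 / 2), sin (2 * π * y) ^ 2 = 1 / 2 := by
  rw [setIntegral_Icc_sin_two_pi_mul_pow, integral_sin_sq]
  simp only [sin_neg, sin_pi]
  field_simp
  ring

lemma setIntegral_Icc_sin_two_pi_mul_pow_four :
    ∫ y in Set.Icc (-(1 / 2) : ℝ) (1 / 2), sin (2 * π * y) ^ 4 = 3 / 8 := by
  rw [setIntegral_Icc_sin_two_pi_mul_pow, integral_sin_pow, integral_sin_sq]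
  simp only [sin_neg, sin_pi, cos_neg, cos_pi]
  field_simp
  ring

lemma integral_mul_sin_two_pi_mul_mul_pow_of_map_eq {Ω : Type*} [MeasurableSpace Ω]
    {P : Measure Ω} {Y : Ω → ℝ} (hY : AEMeasurable Y P)
    (hYunif : P.map Y = volume.restrict (Set.Icc (-(1 / 2) : ℝ) (1 / 2))) (c b : ℝ) (m : ℕ) :
    ∫ ω, (c * sin (2 * π * Y ω) * b) ^ m ∂P
      = (c * b) ^ m * ∫ y in Set.Icc (-(1 / 2) : ℝ) (1 / 2), sin (2 * π * y) ^ m := by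
  have hf : Continuous fun y : ℝ => (c * sin (2 * π * y) * b) ^ m := by fun_prop
  rw [← integral_map hY hf.aestronglyMeasurable, hYunif, ← integral_const_mul]
  congr 1 with y
  ring

lemma summable_ite_lt_mul {ι : Type*} [LT ι] [DecidableLT ι] {a : ι → ℝ} (ha : Summable a)
    (ha0 : 0 ≤ a) :
    Summable fun p : ι × ι => if p.1 < p.2 then a p.1 * a p.2 else 0 :=
  .of_nonneg_of_le (fun p => by split_ifs; exacts [mul_nonneg (ha0 _) (ha0 _), le_rfl])
    (fun p => by split_ifs; exacts [le_rfl, mul_nonneg (ha0 _) (ha0 _)])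
    (ha.mul_of_nonneg ha ha0 ha0)

lemma abs_mul_sin_mul_le {c : ℝ} (hc : 0 ≤ c) (x b : ℝ) : |c * sin x * b| ≤ c * |b| := by
  rw [abs_mul, abs_mul, abs_of_nonneg hc]
  exact mul_le_mul_of_nonneg_right (mul_le_of_le_one_right hc (abs_sin_le_one x)) (abs_nonneg b)

theorem stmt_5
    {Ω : Type*} [MeasurableSpace Ω] (P : Measure Ω) [IsProbabilityMeasure P]
    (Y : ℕ → Ω → ℝ) (hYmeas : ∀ j, Measurable (Y j))
    (hYindep : iIndepFun Y P)
    (hYunif : ∀ j, Measure.map (Y j) P = volume.restrict (Set.Icc (-(1/2) : ℝ) (1/2)))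
    (a : ℕ → ℝ) (ha : Summable fun j => |a j|) :
    (∀ᵐ ω ∂P, Summable (fun j => |(1 / Real.sqrt 6) * Real.sin (2 * π * Y j ω) * a j|)) ∧
    ∫ ω, (∑' j, (1 / Real.sqrt 6) * Real.sin (2 * π * Y j ω) * a j) ^ 4 ∂P
      = (1 / 96) * ∑' j, (a j) ^ 4
        + (1 / 24) * ∑' j, ∑' k, (if j < k then (a j) ^ 2 * (a k) ^ 2 else 0) := by
  set c : ℝ := 1 / √6
  set X : ℕ → Ω → ℝ := fun j ω => c * sin (2 * π * Y j ω) * a j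
  have hc2 : c ^ 2 = 1 / 6 := by simp [c]
  have hXb (j : ℕ) (ω : Ω) : |X j ω| ≤ c * |a j| := abs_mul_sin_mul_le (by positivity) _ _
  have hXmeas (j : ℕ) : Measurable (X j) := by fun_prop
  have hmom (j m : ℕ) := integral_mul_sin_two_pi_mul_mul_pow_of_map_eq (hYmeas j).aemeasurable
    (hYunif j) c (a j) m
  have hX0 (j : ℕ) : ∫ ω, X j ω ∂P = 0 := by
    simpa only [pow_one, setIntegral_Icc_sin_two_pi_mul, mul_zero] using hmom j 1
  have hX2 (j : ℕ) : ∫ ω, X j ω ^ 2 ∂P = a j ^ 2 / 12 := by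
    rw [hmom, setIntegral_Icc_sin_two_pi_mul_sq, mul_pow, hc2]; ring
  have hX4 (j : ℕ) : ∫ ω, X j ω ^ 4 ∂P = a j ^ 4 / 96 := by
    rw [hmom, setIntegral_Icc_sin_two_pi_mul_pow_four, mul_pow,
      show c ^ 4 = (c ^ 2) ^ 2 by ring, hc2]; ring
  have hXindep : iIndepFun X P :=
    hYindep.comp (fun j y => c * sin (2 * π * y) * a j) fun j => by fun_prop
  have hXLp (j : ℕ) : MemLp (X j) 4 P :=
    .of_bound (hXmeas j).aestronglyMeasurable _ (ae_of_all _ (hXb j))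
  refine ⟨ae_of_all _ fun ω =>
    .of_nonneg_of_le (fun j => abs_nonneg _) (hXb · ω) (ha.mul_left c), ?_⟩
  have ha2 := summable_sq_of_summable_abs ha
  have ha4 : Summable fun j => a j ^ 4 := by
    have := summable_sq_of_summable_abs (a := fun j => a j ^ 2) (by simpa only [abs_pow, sq_abs])
    simpa only [← pow_mul] using this
  have hpairs := summable_ite_lt_mul ha2 fun j => sq_nonneg (a j)
  have hlhs := tendsto_integral_sum_range_pow (P := P)
    (fun j => (hXmeas j).aestronglyMeasurable) hXb (ha.mul_left c) 4
  have hpairs_sum : HasSum _ _ := hpairs.tsum_prod ▸ hpairs.hasSum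
  have hrhs := (ha4.hasSum.tendsto_sum_nat.const_mul (1 / 96)).add
    (hpairs_sum.tendsto_sum_range_sum_range.const_mul (1 / 24))
  refine tendsto_nhds_unique (hlhs.congr fun N => ?_) hrhs
  rw [hXindep.integral_sum_range_pow_four hXLp hX0]
  simp only [hX2, hX4, mul_sum, mul_ite, mul_zero]
  ring_nf
end

section
/- Let s, n ∈ ℕ with n ≥ 1, let z ∈ ℤ^s, let α > 1, and let (γ_u)_{u ⊆ {1,…,s}} be positive real weights. Suppose F : ℝ^s → ℂ satisfies F(y) = ∑_{h ∈ ℤ^s} c_h e^{2πi h·y} for all y ∈ [0,1]^s with ∑_{h∈ℤ^s} |c_h| < ∞. Then |I_s(F) − Q_{s,n}(F)| ≤ P_α(γ, z) · sup_{h∈ℤ^s} (|c_h| r_α(γ, h)). -/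
open MeasureTheory Real ENNReal

/-- The unit cube `[0,1]^s`. -/
def unitCube (s : ℕ) : Set (Fin s → ℝ) := Set.univ.pi fun _ => Set.Icc (0 : ℝ) 1

/-- `I_s(F) = ∫_{[0,1]^s} F(y) dy`. -/
noncomputable def latticeI (s : ℕ) (F : (Fin s → ℝ) → ℂ) : ℂ := ∫ y in unitCube s, F y

/-- The rank-1 lattice rule `Q_{s,n}(F) = (1/n) ∑_{k=0}^{n-1} F({k z / n})`. -/
noncomputable def latticeQ (s n : ℕ) (z : Fin s → ℤ) (F : (Fin s → ℝ) → ℂ) : ℂ :=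
  (n : ℂ)⁻¹ * ∑ k ∈ Finset.range n, F fun i => Int.fract ((k : ℝ) * (z i : ℝ) / (n : ℝ))

/-- The support `{j : h_j ≠ 0}` of `h ∈ ℤ^s`. -/
def intSupp {s : ℕ} (h : Fin s → ℤ) : Finset (Fin s) := Finset.univ.filter fun j => h j ≠ 0

/-- `r_α(γ, h) = γ_{supp(h)}⁻¹ ∏_{j ∈ supp(h)} |h_j|^α`. -/
noncomputable def rAlpha {s : ℕ} (α : ℝ) (γ : Finset (Fin s) → ℝ) (h : Fin s → ℤ) : ℝ :=
  (γ (intSupp h))⁻¹ * ∏ j ∈ intSupp h, (|h j| : ℝ) ^ α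

/-- `P_α(γ, z) = ∑_{h ∈ Λ^⊥(z) \ {0}} 1/r_α(γ, h)`, valued in `ℝ≥0∞`. -/
noncomputable def Palpha (s n : ℕ) (α : ℝ) (γ : Finset (Fin s) → ℝ) (z : Fin s → ℤ) : ℝ≥0∞ :=
  ∑' h : {h : Fin s → ℤ // h ≠ 0 ∧ (n : ℤ) ∣ ∑ i, h i * z i},
    ENNReal.ofReal (1 / rAlpha α γ (h : Fin s → ℤ))

/-!
Expand `F` in its absolutely convergent Fourier series; both `latticeI` and `latticeQ` then act
termwise. Integration over the cube kills every character except `h = 0`, whereas the lattice rule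
averages `exp (2πi k (h ⬝ z) / n)` over `k < n`, a geometric sum of `n`-th roots of unity that is `1`
when `h` lies in the dual lattice and `0` otherwise. So the error is `-∑ c h` over the nonzero dual
lattice points, and writing `‖c h‖ = r(h)⁻¹ * (‖c h‖ * r(h))` bounds it by `P_α(γ, z)` times the
supremum.
-/

noncomputable def cubeFourier {s : ℕ} (h : Fin s → ℤ) (y : Fin s → ℝ) : ℂ :=
  Complex.exp (2 * π * Complex.I * ∑ i, (h i : ℂ) * (y i : ℂ))

def dualLattice {s : ℕ} (n : ℕ) (z : Fin s → ℤ) : Set (Fin s → ℤ) :=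
  {h | (n : ℤ) ∣ ∑ i, h i * z i}

lemma Complex.exp_two_pi_I_mul_int (m : ℤ) : Complex.exp (2 * π * Complex.I * m) = 1 := by
  rw [mul_comm]; exact Complex.exp_int_mul_two_pi_mul_I m

section CubeFourier

variable {s : ℕ} (h : Fin s → ℤ)

@[simp]
lemma norm_cubeFourier (y : Fin s → ℝ) : ‖cubeFourier h y‖ = 1 := by
  rw [cubeFourier, ← Complex.norm_exp_ofReal_mul_I (2 * π * ∑ i, (h i : ℝ) * y i)]
  push_cast
  ring_nf

lemma continuous_cubeFourier : Continuous (cubeFourier h) := by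
  unfold cubeFourier; fun_prop

lemma cubeFourier_eq_prod (y : Fin s → ℝ) :
    cubeFourier h y = ∏ i, Complex.exp (2 * π * Complex.I * h i * y i) := by
  rw [cubeFourier, Finset.mul_sum, Complex.exp_sum]
  simp only [mul_assoc]

lemma cubeFourier_add_int (y : Fin s → ℝ) (m : Fin s → ℤ) :
    cubeFourier h (fun i => y i + m i) = cubeFourier h y := by
  have hsplit : 2 * π * Complex.I * ∑ i, (h i : ℂ) * ((y i + m i : ℝ) : ℂ)
      = 2 * π * Complex.I * ∑ i, (h i : ℂ) * (y i : ℂ)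
        + 2 * π * Complex.I * ((∑ i, h i * m i : ℤ) : ℂ) := by
    push_cast
    simp only [mul_add, Finset.sum_add_distrib]
  rw [cubeFourier, hsplit, Complex.exp_add, Complex.exp_two_pi_I_mul_int, mul_one, cubeFourier]

lemma cubeFourier_fract (y : Fin s → ℝ) :
    cubeFourier h (fun i => Int.fract (y i)) = cubeFourier h y := by
  have := cubeFourier_add_int h (fun i => Int.fract (y i)) fun i => ⌊y i⌋
  simp only [Int.fract_add_floor] at this
  exact this.symm

end CubeFourier

lemma integral_Icc_exp_two_pi_I_int_mul (m : ℤ) :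
    ∫ t in Set.Icc (0 : ℝ) 1, Complex.exp (2 * π * Complex.I * m * t) = if m = 0 then 1 else 0 := by
  rw [integral_Icc_eq_integral_Ioc, ← intervalIntegral.integral_of_le zero_le_one]
  split_ifs with hm
  · simp [hm]
  · have hc : 2 * π * Complex.I * m ≠ 0 := by simp [Real.pi_ne_zero, Complex.I_ne_zero, hm]
    simp [integral_exp_mul_complex hc, Complex.exp_two_pi_I_mul_int]

lemma volume_unitCube (s : ℕ) : volume (unitCube s) = 1 := by
  rw [unitCube, volume_pi_pi]
  simp [Real.volume_Icc]

lemma isCompact_unitCube (s : ℕ) : IsCompact (unitCube s) :=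
  isCompact_univ_pi fun _ => isCompact_Icc

lemma measurableSet_unitCube (s : ℕ) : MeasurableSet (unitCube s) :=
  MeasurableSet.univ_pi fun _ => measurableSet_Icc

lemma latticeI_cubeFourier {s : ℕ} (h : Fin s → ℤ) :
    latticeI s (cubeFourier h) = if h = 0 then 1 else 0 := by
  simp only [latticeI, unitCube, cubeFourier_eq_prod]
  rw [volume_pi, Measure.restrict_pi_pi,
    integral_fintype_prod_eq_prod (fun i (t : ℝ) => Complex.exp (2 * π * Complex.I * h i * t))]
  simp [integral_Icc_exp_two_pi_I_int_mul, Finset.prod_boole, funext_iff]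

lemma Complex.exp_two_pi_I_mul_int_div_eq_one_iff {n : ℕ} (hn : n ≠ 0) (m : ℤ) :
    Complex.exp (2 * π * Complex.I * m / n) = 1 ↔ (n : ℤ) ∣ m := by
  rw [Complex.exp_eq_one_iff]
  conv in _ = _ => rw [← mul_comm (2 * π * Complex.I), mul_div_assoc, mul_right_inj' (by simp)]
  field_simp [Nat.cast_ne_zero.mpr hn]
  norm_cast

lemma sum_range_exp_two_pi_I_mul_div {n : ℕ} (hn : n ≠ 0) (m : ℤ) :
    ∑ k ∈ Finset.range n, Complex.exp (2 * π * Complex.I * k * m / n)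
      = if (n : ℤ) ∣ m then (n : ℂ) else 0 := by
  set w := Complex.exp (2 * π * Complex.I * m / n)
  have hpow : ∀ k : ℕ, Complex.exp (2 * π * Complex.I * k * m / n) = w ^ k := fun k => by
    rw [← Complex.exp_nat_mul]; ring_nf
  simp only [hpow]
  split_ifs with hdvd
  · have hw : w = 1 := (Complex.exp_two_pi_I_mul_int_div_eq_one_iff hn m).mpr hdvd
    simp [hw]
  · have hwn : w ^ n = 1 := by
      rw [← hpow, mul_div_right_comm, mul_div_cancel_right₀ _ (by exact_mod_cast hn)]
      exact Complex.exp_two_pi_I_mul_int m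
    rw [geom_sum_eq (mt (Complex.exp_two_pi_I_mul_int_div_eq_one_iff hn m).mp hdvd), hwn,
      sub_self, zero_div]

lemma cubeFourier_lattice_point {s : ℕ} (h z : Fin s → ℤ) (n k : ℕ) :
    cubeFourier h (fun i => k * z i / n)
      = Complex.exp (2 * π * Complex.I * k * (∑ i, h i * z i : ℤ) / n) := by
  rw [cubeFourier]
  push_cast
  congr 1
  simp only [Finset.mul_sum, Finset.sum_div]
  exact Finset.sum_congr rfl fun i _ => by ring

lemma latticeQ_cubeFourier {s n : ℕ} (hn : n ≠ 0) (z h : Fin s → ℤ) :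
    latticeQ s n z (cubeFourier h) = if (n : ℤ) ∣ ∑ i, h i * z i then 1 else 0 := by
  simp only [latticeQ, cubeFourier_fract, cubeFourier_lattice_point,
    sum_range_exp_two_pi_I_mul_div hn]
  split_ifs
  · exact inv_mul_cancel₀ (by exact_mod_cast hn)
  · exact mul_zero _

section LatticeRuleSeries

variable {s : ℕ} {F : (Fin s → ℝ) → ℂ}

lemma latticeI_tsum {ι : Type*} [Countable ι] {f : ι → (Fin s → ℝ) → ℂ}
    (hint : ∀ i, IntegrableOn (f i) (unitCube s))
    (hsum : Summable fun i => ∫ y in unitCube s, ‖f i y‖)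
    (hF : ∀ y ∈ unitCube s, F y = ∑' i, f i y) :
    latticeI s F = ∑' i, latticeI s (f i) := by
  rw [latticeI, setIntegral_congr_fun (measurableSet_unitCube s) hF]
  exact (integral_tsum_of_summable_integral_norm hint hsum).symm

lemma latticeQ_tsum {ι : Type*} (n : ℕ) (z : Fin s → ℤ) {f : ι → (Fin s → ℝ) → ℂ}
    (hsum : ∀ y ∈ unitCube s, Summable fun i => f i y)
    (hF : ∀ y ∈ unitCube s, F y = ∑' i, f i y) :
    latticeQ s n z F = ∑' i, latticeQ s n z (f i) := by
  have hmem : ∀ k : ℕ, (fun i => Int.fract ((k : ℝ) * z i / n)) ∈ unitCube s :=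
    fun k i _ => ⟨Int.fract_nonneg _, (Int.fract_lt_one _).le⟩
  simp only [latticeQ, tsum_mul_left]
  rw [Finset.sum_congr rfl fun k _ => hF _ (hmem k),
    Summable.tsum_finsetSum fun k _ => hsum _ (hmem k)]

variable {c : (Fin s → ℤ) → ℂ}

lemma latticeI_fourierSeries (hsum : Summable fun h => ‖c h‖)
    (hF : ∀ y ∈ unitCube s, F y = ∑' h, c h * cubeFourier h y) :
    latticeI s F = c 0 := by
  have hint : ∀ h, IntegrableOn (fun y => c h * cubeFourier h y) (unitCube s) := fun h =>
    ((continuous_cubeFourier h).const_mul (c h)).continuousOn.integrableOn_compact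
      (isCompact_unitCube s)
  have hnorm : ∀ h, ∫ y in unitCube s, ‖c h * cubeFourier h y‖ = ‖c h‖ := fun h => by
    simp [measureReal_def, volume_unitCube]
  have hmul : ∀ h, latticeI s (fun y => c h * cubeFourier h y) = c h * latticeI s (cubeFourier h) :=
    fun h => integral_const_mul (c h) _
  rw [latticeI_tsum hint (by simpa only [hnorm] using hsum) hF]
  simp [hmul, latticeI_cubeFourier]

lemma latticeQ_fourierSeries {n : ℕ} (hn : n ≠ 0) (z : Fin s → ℤ)
    (hsum : Summable fun h => ‖c h‖)
    (hF : ∀ y ∈ unitCube s, F y = ∑' h, c h * cubeFourier h y) :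
    latticeQ s n z F = ∑' h, (dualLattice n z).indicator c h := by
  have hsum' : ∀ y, Summable fun h => c h * cubeFourier h y := fun y =>
    Summable.of_norm (by simpa using hsum)
  rw [latticeQ_tsum n z (fun y _ => hsum' y) hF]
  congr 1 with h
  have hmul : latticeQ s n z (fun y => c h * cubeFourier h y)
      = c h * latticeQ s n z (cubeFourier h) := by
    simp only [latticeQ, ← Finset.mul_sum]; ring
  classical
  rw [hmul, latticeQ_cubeFourier hn, Set.indicator_apply]
  split_ifs <;> simp_all [dualLattice]

lemma latticeI_sub_latticeQ_fourierSeries {n : ℕ} (hn : n ≠ 0) (z : Fin s → ℤ)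
    (hsum : Summable fun h => ‖c h‖)
    (hF : ∀ y ∈ unitCube s, F y = ∑' h, c h * cubeFourier h y) :
    latticeI s F - latticeQ s n z F = -∑' h : {h // h ≠ 0 ∧ h ∈ dualLattice n z}, c h := by
  classical
  have hdual : Summable ((dualLattice n z).indicator c) :=
    Summable.of_norm_bounded hsum fun h => norm_indicator_le_norm_self c h
  have hzero : (0 : Fin s → ℤ) ∈ dualLattice n z := by simp [dualLattice]
  have hsplit : ∀ h, (if h = 0 then 0 else (dualLattice n z).indicator c h)
      = {h | h ≠ 0 ∧ h ∈ dualLattice n z}.indicator c h := fun h => by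
    by_cases h0 : h = 0 <;> simp [h0, Set.indicator_apply]
  have hsub : ∑' h : {h // h ≠ 0 ∧ h ∈ dualLattice n z}, c h
      = ∑' h, {h | h ≠ 0 ∧ h ∈ dualLattice n z}.indicator c h := _root_.tsum_subtype _ c
  rw [latticeI_fourierSeries hsum hF, latticeQ_fourierSeries hn z hsum hF,
    hdual.tsum_eq_add_tsum_ite 0, Set.indicator_of_mem hzero, funext hsplit, hsub]
  ring

end LatticeRuleSeries

lemma enorm_tsum_le_tsum_inv_mul_iSup {ι E : Type*} [NormedAddCommGroup E] (c : ι → E)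
    {r : ι → ℝ} (hr : ∀ i, 0 < r i) :
    ‖∑' i, c i‖ₑ ≤ (∑' i, ENNReal.ofReal (1 / r i)) * ⨆ i, ENNReal.ofReal (‖c i‖ * r i) := by
  calc ‖∑' i, c i‖ₑ ≤ ∑' i, ‖c i‖ₑ := enorm_tsum_le_tsum_enorm
    _ ≤ ∑' i, ENNReal.ofReal (1 / r i) * ⨆ j, ENNReal.ofReal (‖c j‖ * r j) := by
      refine ENNReal.tsum_le_tsum fun i => ?_
      have hci : ‖c i‖ = 1 / r i * (‖c i‖ * r i) := by field_simp [(hr i).ne']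
      rw [← ofReal_norm, hci, ENNReal.ofReal_mul (one_div_pos.mpr (hr i)).le]
      gcongr
      exact le_iSup (fun j => ENNReal.ofReal (‖c j‖ * r j)) i
    _ = _ := ENNReal.tsum_mul_right

lemma rAlpha_pos {s : ℕ} (α : ℝ) {γ : Finset (Fin s) → ℝ} (hγ : ∀ u, 0 < γ u)
    (h : Fin s → ℤ) : 0 < rAlpha α γ h := by
  refine mul_pos (inv_pos.mpr (hγ _)) (Finset.prod_pos fun j hj => ?_)
  have hj : h j ≠ 0 := (Finset.mem_filter.mp hj).2
  exact Real.rpow_pos_of_pos (by exact_mod_cast abs_pos.mpr hj) α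

theorem stmt_8_general (s n : ℕ) (hn : 1 ≤ n) (z : Fin s → ℤ) (α : ℝ)
    (γ : Finset (Fin s) → ℝ) (hγ : ∀ u, 0 < γ u)
    (F : (Fin s → ℝ) → ℂ) (c : (Fin s → ℤ) → ℂ)
    (hsum : Summable fun h => ‖c h‖)
    (hF : ∀ y : Fin s → ℝ, y ∈ unitCube s →
      F y = ∑' h : Fin s → ℤ,
        c h * Complex.exp (2 * π * Complex.I * ∑ i, (h i : ℂ) * (y i : ℂ))) :
    ENNReal.ofReal (‖latticeI s F - latticeQ s n z F‖)
      ≤ Palpha s n α γ z *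
          ⨆ h : Fin s → ℤ, ENNReal.ofReal (‖c h‖ * rAlpha α γ h) := by
  rw [latticeI_sub_latticeQ_fourierSeries (by omega) z hsum hF, norm_neg, ofReal_norm]
  calc _ ≤ (∑' h : {h // h ≠ 0 ∧ h ∈ dualLattice n z}, ENNReal.ofReal (1 / rAlpha α γ h)) *
        ⨆ h : {h // h ≠ 0 ∧ h ∈ dualLattice n z}, ENNReal.ofReal (‖c h‖ * rAlpha α γ h) :=
        enorm_tsum_le_tsum_inv_mul_iSup _ fun h => rAlpha_pos α hγ h
    -- the index type is definitionally that of the sum defining `Palpha`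
    _ ≤ _ := mul_le_mul_right
        (iSup_comp_le (fun h => ENNReal.ofReal (‖c h‖ * rAlpha α γ h)) Subtype.val) _

theorem stmt_8 (s n : ℕ) (hn : 1 ≤ n) (z : Fin s → ℤ) (α : ℝ) (hα : 1 < α)
    (γ : Finset (Fin s) → ℝ) (hγ : ∀ u, 0 < γ u)
    (F : (Fin s → ℝ) → ℂ) (c : (Fin s → ℤ) → ℂ)
    (hsum : Summable fun h => ‖c h‖)
    (hF : ∀ y : Fin s → ℝ, y ∈ unitCube s →
      F y = ∑' h : Fin s → ℤ,
        c h * Complex.exp (2 * π * Complex.I * ∑ i, (h i : ℂ) * (y i : ℂ))) :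
    ENNReal.ofReal (‖latticeI s F - latticeQ s n z F‖)
      ≤ Palpha s n α γ z *
          ⨆ h : Fin s → ℤ, ENNReal.ofReal (‖c h‖ * rAlpha α γ h) :=
  stmt_8_general s n hn z α γ hγ F c hsum hF
end

section
/- Let s ≥ 1 and α ≥ 1 be integers, let λ ∈ (0, 1], and let β_1, …, β_s be nonnegative real numbers. Then ∑_{ν ∈ {0,1,…,α}^s, ν ≠ 0} (|ν|! ∏_{j=1}^s β_j^{ν_j})^λ ≤ ∑_{ℓ=1}^{∞} (ℓ!)^{λ−1} (α ∑_{j=1}^s β_j^λ)^ℓ, where |ν| := ∑_{j=1}^s ν_j and the right-hand side is allowed to equal +∞. -/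
open Real ENNReal

private lemma aux_fact_le_pow {n a : ℕ} (h : n ≤ a) : n.factorial ≤ a ^ n :=
  (Nat.factorial_le_pow n).trans (Nat.pow_le_pow_left h n)

private lemma aux_key (s α : ℕ) (lam : ℝ) (β : Fin s → ℝ) (hβ : ∀ j, 0 ≤ β j)
    (L : ℕ) :
    ∑ ν ∈ (Fintype.piFinset fun _ : Fin s => Finset.range (α + 1)).filter
        (fun ν => ∑ j, ν j = L),
      ((L.factorial : ℝ) * ∏ j, β j ^ ν j) ^ lam
    ≤ (L.factorial : ℝ) ^ (lam - 1) * ((α : ℝ) * ∑ j, β j ^ lam) ^ L := by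
  classical
  set b : Fin s → ℝ := fun j => β j ^ lam with hbdef
  have hbnn : ∀ j, 0 ≤ b j := fun j => Real.rpow_nonneg (hβ j) lam
  have hfac : (0 : ℝ) < L.factorial := by exact_mod_cast L.factorial_pos
  set F := (Fintype.piFinset fun _ : Fin s => Finset.range (α + 1)).filter
      (fun ν => ∑ j, ν j = L) with hF
  have hterm : ∀ ν ∈ F,
      ((L.factorial : ℝ) * ∏ j, β j ^ ν j) ^ lam
        ≤ (L.factorial : ℝ) ^ (lam - 1) * (α : ℝ) ^ L *
            ((Nat.multinomial Finset.univ ν : ℝ) * ∏ j, b j ^ ν j) := by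
    intro ν hν
    simp only [hF, Finset.mem_filter, Fintype.mem_piFinset, Finset.mem_range] at hν
    obtain ⟨hmem, hsum⟩ := hν
    have hνle : ∀ j, ν j ≤ α := fun j => Nat.lt_succ_iff.mp (hmem j)
    have h1 : ((L.factorial : ℝ) * ∏ j, β j ^ ν j) ^ lam
        = (L.factorial : ℝ) ^ lam * ∏ j, b j ^ ν j := by
      rw [Real.mul_rpow hfac.le (Finset.prod_nonneg fun j _ => pow_nonneg (hβ j) _),
        ← Real.finset_prod_rpow _ _ (fun j _ => pow_nonneg (hβ j) _)]
      congr 1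
      refine Finset.prod_congr rfl fun j _ => ?_
      rw [← Real.rpow_natCast (β j) (ν j), ← Real.rpow_natCast (b j) (ν j), hbdef,
        ← Real.rpow_mul (hβ j), ← Real.rpow_mul (hβ j), mul_comm]
    have h2 : (L.factorial : ℝ) ≤ (α : ℝ) ^ L * (Nat.multinomial Finset.univ ν : ℝ) := by
      have hnat : L.factorial ≤ α ^ L * Nat.multinomial Finset.univ ν := by
        calc L.factorial = (∏ j, (ν j).factorial) * Nat.multinomial Finset.univ ν := by
              rw [Nat.multinomial_spec, hsum]
          _ ≤ α ^ L * Nat.multinomial Finset.univ ν := by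
              refine Nat.mul_le_mul_right _ ?_
              calc ∏ j, (ν j).factorial ≤ ∏ j, α ^ (ν j) :=
                    Finset.prod_le_prod' fun j _ => aux_fact_le_pow (hνle j)
                _ = α ^ (∑ j, ν j) := Finset.prod_pow_eq_pow_sum _ _ _
                _ = α ^ L := by rw [hsum]
      exact_mod_cast hnat
    have h3 : (L.factorial : ℝ) ^ lam = (L.factorial : ℝ) ^ (lam - 1) * L.factorial := by
      rw [← Real.rpow_add_one hfac.ne' (lam - 1), sub_add_cancel]
    have hp : (0 : ℝ) ≤ ∏ j, b j ^ ν j :=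
      Finset.prod_nonneg fun j _ => pow_nonneg (hbnn j) _
    calc ((L.factorial : ℝ) * ∏ j, β j ^ ν j) ^ lam
        = (L.factorial : ℝ) ^ (lam - 1) * ((L.factorial : ℝ) * ∏ j, b j ^ ν j) := by
          rw [h1, h3]; ring
      _ ≤ (L.factorial : ℝ) ^ (lam - 1) *
            (((α : ℝ) ^ L * (Nat.multinomial Finset.univ ν : ℝ)) * ∏ j, b j ^ ν j) := by
          exact mul_le_mul_of_nonneg_left (mul_le_mul_of_nonneg_right h2 hp)
            (Real.rpow_nonneg hfac.le _)
      _ = (L.factorial : ℝ) ^ (lam - 1) * (α : ℝ) ^ L *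
            ((Nat.multinomial Finset.univ ν : ℝ) * ∏ j, b j ^ ν j) := by ring
  calc ∑ ν ∈ F, ((L.factorial : ℝ) * ∏ j, β j ^ ν j) ^ lam
      ≤ ∑ ν ∈ F, (L.factorial : ℝ) ^ (lam - 1) * (α : ℝ) ^ L *
          ((Nat.multinomial Finset.univ ν : ℝ) * ∏ j, b j ^ ν j) :=
        Finset.sum_le_sum hterm
    _ ≤ ∑ ν ∈ Finset.piAntidiag Finset.univ L, (L.factorial : ℝ) ^ (lam - 1) * (α : ℝ) ^ L *
          ((Nat.multinomial Finset.univ ν : ℝ) * ∏ j, b j ^ ν j) := by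
        refine Finset.sum_le_sum_of_subset_of_nonneg ?_ ?_
        · intro ν hν
          simp only [hF, Finset.mem_filter, Finset.mem_piAntidiag] at hν ⊢
          exact ⟨hν.2, fun i _ => Finset.mem_univ i⟩
        · intro ν _ _
          have : (0 : ℝ) ≤ ∏ j, b j ^ ν j :=
            Finset.prod_nonneg fun j _ => pow_nonneg (hbnn j) _
          positivity
    _ = (L.factorial : ℝ) ^ (lam - 1) * (α : ℝ) ^ L *
          ∑ ν ∈ Finset.piAntidiag Finset.univ L,
            (Nat.multinomial Finset.univ ν : ℝ) * ∏ j, b j ^ ν j := by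
        rw [Finset.mul_sum]
    _ = (L.factorial : ℝ) ^ (lam - 1) * (α : ℝ) ^ L * (∑ j, b j) ^ L := by
        rw [← Finset.sum_pow_eq_sum_piAntidiag]
    _ = (L.factorial : ℝ) ^ (lam - 1) * ((α : ℝ) * ∑ j, b j) ^ L := by
        rw [mul_pow]; ring

theorem stmt_13 (s α : ℕ) (hs : 1 ≤ s) (hα : 1 ≤ α)
    (lam : ℝ) (hlam : lam ∈ Set.Ioc (0 : ℝ) 1)
    (β : Fin s → ℝ) (hβ : ∀ j, 0 ≤ β j) :
    ∑ ν ∈ (Fintype.piFinset fun _ : Fin s => Finset.range (α + 1)).filter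
        (fun ν => ν ≠ 0),
      ENNReal.ofReal ((((∑ j, ν j).factorial : ℝ) * ∏ j, β j ^ ν j) ^ lam)
      ≤ ∑' ℓ : ℕ,
          ENNReal.ofReal
            ((((ℓ + 1).factorial : ℝ)) ^ (lam - 1) *
              ((α : ℝ) * ∑ j, β j ^ lam) ^ (ℓ + 1)) := by
  classical
  have hone : ∀ ν : Fin s → ℕ, ν ≠ 0 → 1 ≤ ∑ j, ν j := by
    intro ν hν
    rcases Function.ne_iff.mp hν with ⟨j, hj⟩
    calc 1 ≤ ν j := Nat.one_le_iff_ne_zero.mpr hj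
      _ ≤ ∑ j, ν j := Finset.single_le_sum (fun i _ => Nat.zero_le _) (Finset.mem_univ j)
  have hmaps : ∀ ν ∈ (Fintype.piFinset fun _ : Fin s => Finset.range (α + 1)).filter
      (fun ν => ν ≠ 0), (∑ j, ν j) - 1 ∈ Finset.range (s * α) := by
    intro ν hν
    simp only [Finset.mem_filter, Fintype.mem_piFinset, Finset.mem_range] at hν ⊢
    obtain ⟨hmem, hne⟩ := hν
    have h1 : 1 ≤ ∑ j, ν j := hone ν hne
    have h2 : ∑ j, ν j ≤ s * α := by
      calc ∑ j, ν j ≤ ∑ _j : Fin s, α :=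
            Finset.sum_le_sum fun j _ => Nat.lt_succ_iff.mp (hmem j)
        _ = s * α := by simp [Finset.sum_const, Finset.card_univ, mul_comm]
    omega
  rw [← Finset.sum_fiberwise_of_maps_to hmaps]
  refine le_trans (Finset.sum_le_sum fun ℓ _ => ?_) (ENNReal.sum_le_tsum (Finset.range (s * α)))
  have hfib : ((Fintype.piFinset fun _ : Fin s => Finset.range (α + 1)).filter
        (fun ν => ν ≠ 0)).filter (fun ν => (∑ j, ν j) - 1 = ℓ)
      = (Fintype.piFinset fun _ : Fin s => Finset.range (α + 1)).filter
        (fun ν => ∑ j, ν j = ℓ + 1) := by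
    rw [Finset.filter_filter]
    refine Finset.filter_congr fun ν _ => ?_
    constructor
    · rintro ⟨hne, hℓ⟩
      have := hone ν hne
      omega
    · intro h
      refine ⟨fun h0 => ?_, by omega⟩
      rw [h0] at h
      simp at h
  rw [hfib]
  have hcongr : ∀ ν ∈ (Fintype.piFinset fun _ : Fin s => Finset.range (α + 1)).filter
      (fun ν => ∑ j, ν j = ℓ + 1),
      ENNReal.ofReal ((((∑ j, ν j).factorial : ℝ) * ∏ j, β j ^ ν j) ^ lam)
        = ENNReal.ofReal ((((ℓ + 1).factorial : ℝ) * ∏ j, β j ^ ν j) ^ lam) := by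
    intro ν hν
    simp only [Finset.mem_filter] at hν
    rw [hν.2]
  rw [Finset.sum_congr rfl hcongr, ← ENNReal.ofReal_sum_of_nonneg]
  · exact ENNReal.ofReal_le_ofReal (aux_key s α lam β hβ (ℓ + 1))
  · intro ν _
    exact Real.rpow_nonneg
      (mul_nonneg (Nat.cast_nonneg _) (Finset.prod_nonneg fun j _ => pow_nonneg (hβ j) _)) _
end

section
/- Let σ ∈ ℕ with σ ≥ 1, let (Γ_ℓ)_{ℓ≥0} be positive real numbers, let (γ_{j,m}) for j ≥ 1 and 1 ≤ m ≤ σ be real numbers, and let (x_j)_{j≥1} be real numbers. For s ≥ 0 and ℓ ≥ 0 define p_{s,ℓ} := ∑_{ν ∈ {0,1,…,σ}^s, |ν| = ℓ} Γ_ℓ ∏_{j ∈ {1,…,s}: ν_j ≠ 0} (γ_{j,ν_j} x_j), so that p_{s,0} = Γ_0 and p_{s,ℓ} = 0 whenever ℓ > σs. Then for all s ≥ 1 and all 1 ≤ ℓ ≤ σs: p_{s,ℓ} = p_{s−1,ℓ} + x_s ∑_{w=1}^{min{ℓ,σ}} (Γ_ℓ / Γ_{ℓ−w}) γ_{s,w}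 p_{s−1,ℓ−w}. -/
/-- `p_{s,ℓ} = ∑_{ν ∈ {0,…,σ}^s, |ν| = ℓ} Γ_ℓ ∏_{j ∈ {1,…,s} : ν_j ≠ 0} (γ_{j,ν_j} x_j)`,
where the `j`-th coordinate (1-based) corresponds to the index `j` of `γ` and `x`. -/
noncomputable def pCBC (σ : ℕ) (Γ : ℕ → ℝ) (γ : ℕ → ℕ → ℝ) (x : ℕ → ℝ) (s ℓ : ℕ) : ℝ :=
  ∑ ν ∈ (Fintype.piFinset fun _ : Fin s => Finset.range (σ + 1)).filter
      (fun ν => ∑ j, ν j = ℓ),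
    Γ ℓ * ∏ j ∈ Finset.univ.filter (fun j : Fin s => ν j ≠ 0),
      γ (j.1 + 1) (ν j) * x (j.1 + 1)

/-! Dividing out `Γ_ℓ`, `p_{s,ℓ}` is the coefficient of `X^ℓ` in
`∏_{j ≤ s} (1 + x_j ∑_{w=1}^{σ} γ_{j,w} X^w)`: expanding the product over the choices
`ν_j ∈ {0, …, σ}` reproduces the defining sum. Peeling off the factor `j = s` and reading off
the coefficient of `X^ℓ` gives the recursion, with `w = 0` contributing `p_{s-1,ℓ}`. -/

open Polynomial Finset

theorem Polynomial.coeff_prod_sum_C_mul_X_pow {R : Type*} [CommSemiring R] {ι : Type*} [Fintype ι]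
    [DecidableEq ι] (t : Finset ℕ) (c : ι → ℕ → R) (ℓ : ℕ) :
    (∏ i, ∑ w ∈ t, C (c i w) * X ^ w).coeff ℓ
      = ∑ ν ∈ Fintype.piFinset fun _ => t, if ∑ i, ν i = ℓ then ∏ i, c i (ν i) else 0 := by
  simp only [prod_univ_sum, prod_mul_distrib, ← map_prod, prod_pow_eq_pow_sum, finsetSum_coeff,
    coeff_C_mul_X_pow, eq_comm (a := ℓ)]

theorem Polynomial.coeff_mul_sum_C_mul_X_pow {R : Type*} [CommSemiring R] (p : R[X])
    (t : Finset ℕ) (c : ℕ → R) (ℓ : ℕ) :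
    (p * ∑ w ∈ t, C (c w) * X ^ w).coeff ℓ = ∑ w ∈ t with w ≤ ℓ, c w * p.coeff (ℓ - w) := by
  simp only [mul_sum, finsetSum_coeff, sum_filter, mul_left_comm p, coeff_C_mul, coeff_mul_X_pow']
  exact sum_congr rfl fun w _ => by split_ifs <;> simp

/-- The weight `1` at `w = 0` accounts for the coordinates with `ν_j = 0`, which `pCBC` omits
from its product. -/
noncomputable def cbcWeight (γ : ℕ → ℕ → ℝ) (x : ℕ → ℝ) (j w : ℕ) : ℝ :=
  if w = 0 then 1 else γ j w * x j

noncomputable def cbcFactor (σ : ℕ) (γ : ℕ → ℕ → ℝ) (x : ℕ → ℝ) (j : ℕ) : ℝ[X] :=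
  ∑ w ∈ range (σ + 1), C (cbcWeight γ x j w) * X ^ w

noncomputable def cbcPoly (σ : ℕ) (γ : ℕ → ℕ → ℝ) (x : ℕ → ℝ) (s : ℕ) : ℝ[X] :=
  ∏ j : Fin s, cbcFactor σ γ x (j + 1)

theorem pCBC_eq_mul_coeff_cbcPoly (σ : ℕ) (Γ : ℕ → ℝ) (γ : ℕ → ℕ → ℝ) (x : ℕ → ℝ) (s ℓ : ℕ) :
    pCBC σ Γ γ x s ℓ = Γ ℓ * (cbcPoly σ γ x s).coeff ℓ := by
  simp only [cbcPoly, cbcFactor]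
  rw [coeff_prod_sum_C_mul_X_pow, pCBC, sum_filter, mul_sum]
  refine sum_congr rfl fun ν _ => ?_
  rw [prod_filter]
  split_ifs
  · congr 1
    exact prod_congr rfl fun j _ => by rw [cbcWeight]; split_ifs <;> simp_all
  · simp

theorem cbcPoly_succ (σ : ℕ) (γ : ℕ → ℕ → ℝ) (x : ℕ → ℝ) (s : ℕ) :
    cbcPoly σ γ x (s + 1) = cbcPoly σ γ x s * cbcFactor σ γ x (s + 1) := by
  simp [cbcPoly, Fin.prod_univ_castSucc]

theorem stmt_15_general (σ : ℕ) (Γ : ℕ → ℝ) (hΓ : ∀ ℓ, 0 < Γ ℓ)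
    (γ : ℕ → ℕ → ℝ) (x : ℕ → ℝ) :
    ∀ s : ℕ, 1 ≤ s → ∀ ℓ : ℕ, 1 ≤ ℓ → ℓ ≤ σ * s →
      pCBC σ Γ γ x s ℓ
        = pCBC σ Γ γ x (s - 1) ℓ +
            x s * ∑ w ∈ Finset.Icc 1 (min ℓ σ),
              (Γ ℓ / Γ (ℓ - w)) * γ s w * pCBC σ Γ γ x (s - 1) (ℓ - w) := by
  intro s hs ℓ _ _
  obtain ⟨n, rfl⟩ : ∃ n, s = n + 1 := ⟨s - 1, by omega⟩
  have hsupport : {w ∈ range (σ + 1) | w ≤ ℓ} = insert 0 (Icc 1 (min ℓ σ)) := by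
    ext w
    simp only [mem_filter, mem_range, mem_insert, mem_Icc, le_inf_iff]
    omega
  rw [Nat.add_sub_cancel, pCBC_eq_mul_coeff_cbcPoly, cbcPoly_succ, cbcFactor,
    coeff_mul_sum_C_mul_X_pow, hsupport, sum_insert (by simp), mul_add, mul_sum, mul_sum,
    pCBC_eq_mul_coeff_cbcPoly]
  congr 1
  · simp [cbcWeight]
  refine sum_congr rfl fun w hw => ?_
  have hw0 : w ≠ 0 := Nat.one_le_iff_ne_zero.1 (mem_Icc.1 hw).1
  rw [cbcWeight, if_neg hw0, pCBC_eq_mul_coeff_cbcPoly]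
  field_simp [(hΓ (ℓ - w)).ne']

theorem stmt_15 (σ : ℕ) (hσ : 1 ≤ σ) (Γ : ℕ → ℝ) (hΓ : ∀ ℓ, 0 < Γ ℓ)
    (γ : ℕ → ℕ → ℝ) (x : ℕ → ℝ) :
    ∀ s : ℕ, 1 ≤ s → ∀ ℓ : ℕ, 1 ≤ ℓ → ℓ ≤ σ * s →
      pCBC σ Γ γ x s ℓ
        = pCBC σ Γ γ x (s - 1) ℓ +
            x s * ∑ w ∈ Finset.Icc 1 (min ℓ σ),
              (Γ ℓ / Γ (ℓ - w)) * γ s w * pCBC σ Γ γ x (s - 1) (ℓ - w) :=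
  stmt_15_general σ Γ hΓ γ x
end
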